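/- arXiv:1806.07928 — 6 statements merged into one kernel-verified Lean document; each statement's English description precedes it below -/
import Mathlib

section
/- Let C_A, C_B, C_X ≥ 0. Suppose A_i, B_i : Ω → ℝ satisfy that A_i⁴ and B_i⁴ are integrable with E[A_i⁴] ≤ C_A and E[B_i⁴] ≤ C_B for every i ∈ I, and suppose 𝒜_s : Ω → ℝ is square-integrable with E[𝒜_s²] ≤ C_X for every s ∈ S. Then the random variable ∑_{i∈I} ∑_{j∈I} ∑_{s∈S} w_{is} w_{js} A_i B_j 𝒜_s is integrable and E[|∑_{i,j∈I} ∑_{s∈S} w_{is} w_{js} A_i B_j 𝒜_s|] ≤ C_A^{1/4} · C_B^{1/4} · C_X^{1/2} · ∑_{s∈S} n_s². (Quantitative expectation bound proved in Online Appendix Lemma A.3; by Markov's inequality it yields that (∑_s n_s²)^{-1} ∑_{i,j,s} w_{is} w_{js} A_i B_j 𝒜_s = O_p(1).) -/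
/-!
By the triangle inequality it suffices to bound each `E|A_i B_j 𝒜_s|`. The three-factor Hölder
inequality with `1/4 + 1/4 + 1/2 = 1` bounds it by `‖A_i‖₄ ‖B_j‖₄ ‖𝒜_s‖₂ ≤ C_A^(1/4) C_B^(1/4)
C_X^(1/2)`, and the nonnegative weights `w_is w_js` add up to `∑_s n_s²`.
-/

open MeasureTheory ENNReal

instance ENNReal.holderTriple_four_four_two : HolderTriple (4 : ℝ≥0∞) 4 2 where
  inv_add_inv_eq_inv := by
    rw [← ENNReal.add_halves (2⁻¹ : ℝ≥0∞), ENNReal.div_eq_inv_mul,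
      ← ENNReal.mul_inv (by simp) (by simp)]
    norm_num

section

variable {Ω : Type*} [MeasurableSpace Ω] {μ : Measure Ω} {f g h : Ω → ℝ}

theorem lpNorm_mul_le {p q r : ℝ≥0∞} [HolderTriple p q r] (hf : MemLp f p μ)
    (hg : MemLp g q μ) :
    lpNorm (f * g) r μ ≤ lpNorm f p μ * lpNorm g q μ := by
  have holder : eLpNorm (f * g) r μ ≤ eLpNorm f p μ * eLpNorm g q μ :=
    eLpNorm_smul_le_mul_eLpNorm (𝕜 := ℝ) (E := ℝ) hg.1 hf.1
  rw [← toReal_eLpNorm hf.1, ← toReal_eLpNorm hg.1, ← toReal_eLpNorm (hf.1.mul hg.1),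
    ← ENNReal.toReal_mul]
  exact ENNReal.toReal_mono (ENNReal.mul_ne_top hf.eLpNorm_ne_top hg.eLpNorm_ne_top) holder

theorem lpNorm_mul_mul_le {p q r s t : ℝ≥0∞} [HolderTriple p q s] [HolderTriple s r t]
    (hf : MemLp f p μ) (hg : MemLp g q μ) (hh : MemLp h r μ) :
    lpNorm (f * g * h) t μ ≤ lpNorm f p μ * lpNorm g q μ * lpNorm h r μ :=
  (lpNorm_mul_le (hg.mul (r := s) hf) hh).trans
    (mul_le_mul_of_nonneg_right (lpNorm_mul_le hf hg) lpNorm_nonneg)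

theorem lpNorm_le_rpow_of_integral_pow_le {n : ℕ} (hn : Even n) (hn0 : n ≠ 0)
    (hf : AEStronglyMeasurable f μ) {C : ℝ} (hC : ∫ ω, f ω ^ n ∂μ ≤ C) :
    lpNorm f n μ ≤ C ^ ((1 : ℝ) / n) := by
  have := lpNorm_nnreal_eq_integral_norm_rpow (p := n) (by simpa using hn0) hf
  simp only [ENNReal.coe_natCast, NNReal.coe_natCast, Real.rpow_natCast, Real.norm_eq_abs,
    hn.pow_abs] at this
  rw [this, one_div]
  exact Real.rpow_le_rpow (integral_nonneg fun ω => hn.pow_nonneg _) hC (by positivity)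

theorem integral_abs_mul_mul_le_of_integral_pow_le {Cf Cg Ch : ℝ}
    (hf : MemLp f 4 μ) (hfC : ∫ ω, f ω ^ 4 ∂μ ≤ Cf) (hg : MemLp g 4 μ)
    (hgC : ∫ ω, g ω ^ 4 ∂μ ≤ Cg) (hh : MemLp h 2 μ) (hhC : ∫ ω, h ω ^ 2 ∂μ ≤ Ch) :
    ∫ ω, |f ω * g ω * h ω| ∂μ ≤ Cf ^ ((1 : ℝ) / 4) * Cg ^ ((1 : ℝ) / 4) * Ch ^ ((1 : ℝ) / 2) := by
  have hf' := lpNorm_le_rpow_of_integral_pow_le (n := 4) (by decide) (by decide) hf.1 hfC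
  have hg' := lpNorm_le_rpow_of_integral_pow_le (n := 4) (by decide) (by decide) hg.1 hgC
  have hh' := lpNorm_le_rpow_of_integral_pow_le (n := 2) (by decide) (by decide) hh.1 hhC
  push_cast at hf' hg' hh'
  calc ∫ ω, |f ω * g ω * h ω| ∂μ = lpNorm (f * g * h) 1 μ :=
        (lpNorm_one_eq_integral_norm (hh.mul (r := 1) (hg.mul (r := 2) hf)).1).symm
    _ ≤ lpNorm f 4 μ * lpNorm g 4 μ * lpNorm h 2 μ := lpNorm_mul_mul_le (s := 2) hf hg hh
    _ ≤ _ := mul_le_mul (mul_le_mul hf' hg' lpNorm_nonneg (lpNorm_nonneg.trans hf')) hh'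
        lpNorm_nonneg (mul_nonneg (lpNorm_nonneg.trans hf') (lpNorm_nonneg.trans hg'))

theorem integral_abs_sum_mul_le {ι : Type*} (t : Finset ι) {c : ι → ℝ}
    (hc : ∀ k ∈ t, 0 ≤ c k) {F : ι → Ω → ℝ} (hF : ∀ k ∈ t, Integrable (F k) μ) {K : ℝ}
    (hK : ∀ k ∈ t, ∫ ω, |F k ω| ∂μ ≤ K) :
    ∫ ω, |∑ k ∈ t, c k * F k ω| ∂μ ≤ K * ∑ k ∈ t, c k := by
  have habs : ∀ k ∈ t, Integrable (fun ω => c k * |F k ω|) μ :=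
    fun k hk => (hF k hk).abs.const_mul _
  calc ∫ ω, |∑ k ∈ t, c k * F k ω| ∂μ
      ≤ ∫ ω, ∑ k ∈ t, c k * |F k ω| ∂μ := by
        refine integral_mono (integrable_finsetSum _ fun k hk => (hF k hk).const_mul _).abs
          (integrable_finsetSum _ habs) fun ω => ?_
        refine (Finset.abs_sum_le_sum_abs _ _).trans_eq (Finset.sum_congr rfl fun k hk => ?_)
        rw [abs_mul, abs_of_nonneg (hc k hk)]
    _ = ∑ k ∈ t, c k * ∫ ω, |F k ω| ∂μ := by
        rw [integral_finsetSum _ habs]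
        simp only [integral_const_mul]
    _ ≤ ∑ k ∈ t, c k * K :=
        Finset.sum_le_sum fun k hk => mul_le_mul_of_nonneg_left (hK k hk) (hc k hk)
    _ = K * ∑ k ∈ t, c k := by rw [Finset.mul_sum]; simp only [mul_comm]

end

theorem Finset.sum_sum_sum_mul_eq_sum_sq {I S : Type*} [Fintype I] [Fintype S]
    (w : I → S → ℝ) :
    ∑ i, ∑ j, ∑ s, w i s * w j s = ∑ s, (∑ i, w i s) ^ 2 := by
  simp_rw [sq, Finset.sum_mul_sum]
  exact (Finset.sum_congr rfl fun i _ => Finset.sum_comm).trans Finset.sum_comm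

theorem stmt_4_general {Ω : Type*} [MeasurableSpace Ω] (μ : Measure Ω)
    {I S : Type*} [Fintype I] [Fintype S]
    (w : I → S → ℝ) (hw : ∀ i s, 0 ≤ w i s)
    (CA CB CX : ℝ)
    (A B : I → Ω → ℝ) (X : S → Ω → ℝ)
    (hA : ∀ i, MemLp (A i) 4 μ) (hAbd : ∀ i, ∫ ω, (A i ω) ^ 4 ∂μ ≤ CA)
    (hB : ∀ i, MemLp (B i) 4 μ) (hBbd : ∀ i, ∫ ω, (B i ω) ^ 4 ∂μ ≤ CB)
    (hX : ∀ s, MemLp (X s) 2 μ) (hXbd : ∀ s, ∫ ω, (X s ω) ^ 2 ∂μ ≤ CX) :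
    Integrable (fun ω => ∑ i, ∑ j, ∑ s, w i s * w j s * A i ω * B j ω * X s ω) μ ∧
      ∫ ω, |∑ i, ∑ j, ∑ s, w i s * w j s * A i ω * B j ω * X s ω| ∂μ
        ≤ CA ^ ((1 : ℝ) / 4) * CB ^ ((1 : ℝ) / 4) * CX ^ ((1 : ℝ) / 2)
            * ∑ s, (∑ i, w i s) ^ 2 := by
  set F : I × I × S → Ω → ℝ := fun k => A k.1 * B k.2.1 * X k.2.2
  set c : I × I × S → ℝ := fun k => w k.1 k.2.2 * w k.2.1 k.2.2
  have hsum : ∀ ω, ∑ i, ∑ j, ∑ s, w i s * w j s * A i ω * B j ω * X s ω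
      = ∑ k, c k * F k ω := fun ω => by
    simp only [Fintype.sum_prod_type, c, F, Pi.mul_apply]
    exact Finset.sum_congr rfl fun i _ => Finset.sum_congr rfl fun j _ =>
      Finset.sum_congr rfl fun s _ => by ring
  have hc : ∑ k, c k = ∑ s, (∑ i, w i s) ^ 2 := by
    rw [← Finset.sum_sum_sum_mul_eq_sum_sq]
    simp only [Fintype.sum_prod_type, c]
  have hF : ∀ k, Integrable (F k) μ := fun k =>
    memLp_one_iff_integrable.mp <| (hX k.2.2).mul ((hB k.2.1).mul (r := 2) (hA k.1))
  simp_rw [hsum, ← hc]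
  exact ⟨integrable_finsetSum _ fun k _ => (hF k).const_mul _,
    integral_abs_sum_mul_le _ (fun k _ => mul_nonneg (hw _ _) (hw _ _)) (fun k _ => hF k)
      fun k _ => integral_abs_mul_mul_le_of_integral_pow_le (hA k.1) (hAbd k.1) (hB k.2.1)
        (hBbd k.2.1) (hX k.2.2) (hXbd k.2.2)⟩

/-- Quantitative expectation bound from Online Appendix Lemma A.3: with nonnegative weights
`w i s`, fourth moments of `A i` and `B j` bounded by `C_A` and `C_B`, and second moments of
`𝒜 s` bounded by `C_X`, the triple sum `∑ i j s, w i s * w j s * A i * B j * 𝒜 s` is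
integrable with `E[|·|] ≤ C_A^(1/4) * C_B^(1/4) * C_X^(1/2) * ∑ s, n s ^ 2`. -/
theorem stmt_4 {Ω : Type*} [MeasurableSpace Ω] (μ : Measure Ω) [IsProbabilityMeasure μ]
    {I S : Type*} [Fintype I] [Fintype S] [Nonempty I] [Nonempty S]
    (w : I → S → ℝ) (hw : ∀ i s, 0 ≤ w i s)
    (CA CB CX : ℝ) (hCA : 0 ≤ CA) (hCB : 0 ≤ CB) (hCX : 0 ≤ CX)
    (A B : I → Ω → ℝ) (X : S → Ω → ℝ)
    (hA : ∀ i, MemLp (A i) 4 μ) (hAbd : ∀ i, ∫ ω, (A i ω) ^ 4 ∂μ ≤ CA)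
    (hB : ∀ i, MemLp (B i) 4 μ) (hBbd : ∀ i, ∫ ω, (B i ω) ^ 4 ∂μ ≤ CB)
    (hX : ∀ s, MemLp (X s) 2 μ) (hXbd : ∀ s, ∫ ω, (X s ω) ^ 2 ∂μ ≤ CX) :
    Integrable (fun ω => ∑ i, ∑ j, ∑ s, w i s * w j s * A i ω * B j ω * X s ω) μ ∧
      ∫ ω, |∑ i, ∑ j, ∑ s, w i s * w j s * A i ω * B j ω * X s ω| ∂μ
        ≤ CA ^ ((1 : ℝ) / 4) * CB ^ ((1 : ℝ) / 4) * CX ^ ((1 : ℝ) / 2)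
            * ∑ s, (∑ i, w i s) ^ 2 :=
  stmt_4_general μ w hw CA CB CX A B X hA hAbd hB hBbd hX hXbd
end

section
/- Let M ≥ 0 satisfy n_s ≤ M for every s ∈ S. Then ∑_{s∈S} ∑_{t∈S} ∑_{u∈S} ∑_{v∈S} w̄_{st} w̄_{su} w̄_{vt} w̄_{vu} ≤ M² · ∑_{s∈S} n_s². (Deterministic inequality (A.9) in the proof of asymptotic normality of the shift-share OLS estimator.) -/
/-!
Write `B s t = w̄ s t`. Its entries and its column sums are at most `n t ≤ M` (the column sum
because `∑ s, w i s ≤ 1`), so `∑ v, B v t * B v u ≤ M ^ 2` for all `t, u`. Pulling this bound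
out of the quadruple sum leaves `M ^ 2 * ∑ s, (∑ t, B s t) ^ 2`, and the row sums of `B` are at
most `n s`.
-/

open Finset

section NonnegMatrix

variable {α β : Type*} [Fintype α] {B : α → β → ℝ} {M : ℝ}

theorem sum_mul_col_le (hB : ∀ s t, 0 ≤ B s t) (hBM : ∀ s t, B s t ≤ M)
    (hcol : ∀ t, ∑ v, B v t ≤ M) (hM : 0 ≤ M) (t u : β) :
    ∑ v, B v t * B v u ≤ M ^ 2 :=
  calc ∑ v, B v t * B v u ≤ ∑ v, B v t * M :=
        sum_le_sum fun v _ => mul_le_mul_of_nonneg_left (hBM v u) (hB v t)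
    _ = (∑ v, B v t) * M := (sum_mul ..).symm
    _ ≤ M * M := mul_le_mul_of_nonneg_right (hcol t) hM
    _ = M ^ 2 := (sq M).symm

theorem sum_quartic_le [Fintype β] (hB : ∀ s t, 0 ≤ B s t) (hBM : ∀ s t, B s t ≤ M)
    (hcol : ∀ t, ∑ v, B v t ≤ M) (hM : 0 ≤ M) {r : α → ℝ} (hrow : ∀ s, ∑ t, B s t ≤ r s) :
    ∑ s, ∑ t, ∑ u, ∑ v, B s t * B s u * B v t * B v u ≤ M ^ 2 * ∑ s, r s ^ 2 :=
  calc ∑ s, ∑ t, ∑ u, ∑ v, B s t * B s u * B v t * B v u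
        = ∑ s, ∑ t, ∑ u, B s t * B s u * ∑ v, B v t * B v u := by
          simp only [mul_sum, mul_assoc]
    _ ≤ ∑ s, ∑ t, ∑ u, B s t * B s u * M ^ 2 := by
          gcongr with s _ t _ u _
          · exact mul_nonneg (hB s t) (hB s u)
          · exact sum_mul_col_le hB hBM hcol hM t u
    _ = M ^ 2 * ∑ s, (∑ t, B s t) ^ 2 := by
          simp only [sq (∑ t, B _ t), mul_sum, sum_mul]
          exact sum_congr rfl fun _ _ => sum_congr rfl fun _ _ => sum_congr rfl fun _ _ => by ring
    _ ≤ M ^ 2 * ∑ s, r s ^ 2 := by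
          gcongr with s _
          · exact sum_nonneg fun t _ => hB s t
          · exact hrow s

end NonnegMatrix

section Overlap

variable {I S : Type*} [Fintype I] {w : I → S → ℝ}

def overlap (w : I → S → ℝ) (s t : S) : ℝ := ∑ i, w i s * w i t

theorem overlap_comm (w : I → S → ℝ) (s t : S) : overlap w s t = overlap w t s := by
  simp only [overlap, mul_comm]

theorem overlap_nonneg (hw : ∀ i s, 0 ≤ w i s) (s t : S) : 0 ≤ overlap w s t :=
  sum_nonneg fun i _ => mul_nonneg (hw i s) (hw i t)

theorem sum_overlap_le [Fintype S] (hw : ∀ i s, 0 ≤ w i s) (hw1 : ∀ i, ∑ s, w i s ≤ 1)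
    (s : S) : ∑ t, overlap w s t ≤ ∑ i, w i s :=
  calc ∑ t, overlap w s t = ∑ i, w i s * ∑ t, w i t := by
        simp only [overlap, mul_sum]; exact sum_comm
    _ ≤ ∑ i, w i s * 1 := sum_le_sum fun i _ => mul_le_mul_of_nonneg_left (hw1 i) (hw i s)
    _ = ∑ i, w i s := by simp only [mul_one]

theorem overlap_le [Fintype S] (hw : ∀ i s, 0 ≤ w i s) (hw1 : ∀ i, ∑ s, w i s ≤ 1)
    (s t : S) : overlap w s t ≤ ∑ i, w i t :=
  overlap_comm w s t ▸
    (single_le_sum (fun u _ => overlap_nonneg hw t u) (mem_univ s)).trans (sum_overlap_le hw hw1 t)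

end Overlap

theorem stmt_5_general {I S : Type*} [Fintype I] [Fintype S]
    (w : I → S → ℝ) (hw : ∀ i s, 0 ≤ w i s) (hw1 : ∀ i, ∑ s, w i s ≤ 1)
    (M : ℝ) (hM : 0 ≤ M) (hn : ∀ s, ∑ i, w i s ≤ M) :
    ∑ s, ∑ t, ∑ u, ∑ v,
        (∑ i, w i s * w i t) * (∑ i, w i s * w i u) *
          (∑ i, w i v * w i t) * (∑ i, w i v * w i u)
      ≤ M ^ 2 * ∑ s, (∑ i, w i s) ^ 2 := by
  have hcol : ∀ t, ∑ v, overlap w v t ≤ M := fun t => by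
    simpa only [overlap_comm w _ t] using (sum_overlap_le hw hw1 t).trans (hn t)
  exact sum_quartic_le (B := overlap w) (overlap_nonneg hw)
    (fun s t => (overlap_le hw hw1 s t).trans (hn t)) hcol hM (sum_overlap_le hw hw1)

/-- Deterministic inequality (A.9) in the proof of asymptotic normality: if `n s ≤ M` for
every sector `s`, then `∑ s t u v, w̄ s t * w̄ s u * w̄ v t * w̄ v u ≤ M^2 * ∑ s, n s ^ 2`,
where `n s = ∑ i, w i s` and `w̄ s t = ∑ i, w i s * w i t`. -/
theorem stmt_5 {I S : Type*} [Fintype I] [Fintype S] [Nonempty I] [Nonempty S]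
    (w : I → S → ℝ) (hw : ∀ i s, 0 ≤ w i s) (hw1 : ∀ i, ∑ s, w i s ≤ 1)
    (M : ℝ) (hM : 0 ≤ M) (hn : ∀ s, ∑ i, w i s ≤ M) :
    ∑ s, ∑ t, ∑ u, ∑ v,
        (∑ i, w i s * w i t) * (∑ i, w i s * w i u) *
          (∑ i, w i v * w i t) * (∑ i, w i v * w i u)
      ≤ M ^ 2 * ∑ s, (∑ i, w i s) ^ 2 :=
  stmt_5_general w hw hw1 M hM hn
end

section
/- Let M ≥ 0 satisfy n_s ≤ M for every s ∈ S. Then ∑_{t∈S} (∑_{s∈S} n_s w̄_{st})² ≤ M² · ∑_{t∈S} n_t². (Deterministic bound used to show that the conditional-variance term D₁ in the proof of asymptotic normality is o_p(1).) -/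
/-!
Exchanging the sums gives `∑ s, n s * w̄ s t = ∑ i, (∑ s, n s * w i s) * w i t`, and for each
region `i` the inner sum is a combination of sizes `n s ≤ M` with weights of total at most `1`,
hence at most `M`. So `0 ≤ ∑ s, n s * w̄ s t ≤ M * n t` for every sector `t`; square and sum.
-/

open Finset

theorem sum_mul_sum_mul_comm {I S R : Type*} [Fintype I] [Fintype S] [CommSemiring R]
    (a : S → R) (w : I → S → R) (v : I → R) :
    ∑ s, a s * ∑ i, w i s * v i = ∑ i, (∑ s, a s * w i s) * v i := by
  simp_rw [mul_sum, sum_mul, mul_assoc]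
  exact sum_comm

theorem sum_mul_le_of_le_of_sum_le_one {S R : Type*} [Fintype S] [Semiring R] [PartialOrder R]
    [IsOrderedRing R] {a p : S → R} {M : R} (hM : 0 ≤ M) (ha : ∀ s, a s ≤ M)
    (hp : ∀ s, 0 ≤ p s) (hp1 : ∑ s, p s ≤ 1) :
    ∑ s, a s * p s ≤ M :=
  calc ∑ s, a s * p s ≤ ∑ s, M * p s :=
        sum_le_sum fun s _ => mul_le_mul_of_nonneg_right (ha s) (hp s)
    _ = M * ∑ s, p s := (mul_sum ..).symm
    _ ≤ M := mul_le_of_le_one_right hM hp1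

theorem sum_size_mul_overlap_le {I S : Type*} [Fintype I] [Fintype S] (w : I → S → ℝ)
    (hw : ∀ i s, 0 ≤ w i s) (hw1 : ∀ i, ∑ s, w i s ≤ 1) {M : ℝ} (hM : 0 ≤ M)
    (hn : ∀ s, ∑ i, w i s ≤ M) (t : S) :
    ∑ s, (∑ i, w i s) * (∑ i, w i s * w i t) ≤ M * ∑ i, w i t := by
  rw [sum_mul_sum_mul_comm, mul_sum]
  exact sum_le_sum fun i _ => mul_le_mul_of_nonneg_right
    (sum_mul_le_of_le_of_sum_le_one hM hn (hw i) (hw1 i)) (hw i t)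

theorem stmt_7_general {I S : Type*} [Fintype I] [Fintype S]
    (w : I → S → ℝ) (hw : ∀ i s, 0 ≤ w i s) (hw1 : ∀ i, ∑ s, w i s ≤ 1)
    (M : ℝ) (hM : 0 ≤ M) (hn : ∀ s, ∑ i, w i s ≤ M) :
    ∑ t, (∑ s, (∑ i, w i s) * (∑ i, w i s * w i t)) ^ 2
      ≤ M ^ 2 * ∑ t, (∑ i, w i t) ^ 2 := by
  rw [mul_sum]
  refine sum_le_sum fun t _ => ?_
  have h_nonneg : 0 ≤ ∑ s, (∑ i, w i s) * (∑ i, w i s * w i t) :=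
    sum_nonneg fun s _ => mul_nonneg (sum_nonneg fun i _ => hw i s)
      (sum_nonneg fun i _ => mul_nonneg (hw i s) (hw i t))
  rw [← mul_pow]
  exact pow_le_pow_left₀ h_nonneg (sum_size_mul_overlap_le w hw hw1 hM hn t) 2

/-- Deterministic bound used to show the conditional-variance term `D₁` is `o_p(1)`:
if `n s ≤ M` for every `s`, then `∑ t, (∑ s, n s * w̄ s t)^2 ≤ M^2 * ∑ t, n t ^ 2`,
where `n s = ∑ i, w i s` and `w̄ s t = ∑ i, w i s * w i t`. -/
theorem stmt_7 {I S : Type*} [Fintype I] [Fintype S] [Nonempty I] [Nonempty S]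
    (w : I → S → ℝ) (hw : ∀ i s, 0 ≤ w i s) (hw1 : ∀ i, ∑ s, w i s ≤ 1)
    (M : ℝ) (hM : 0 ≤ M) (hn : ∀ s, ∑ i, w i s ≤ M) :
    ∑ t, (∑ s, (∑ i, w i s) * (∑ i, w i s * w i t)) ^ 2
      ≤ M ^ 2 * ∑ t, (∑ i, w i t) ^ 2 :=
  stmt_7_general w hw hw1 M hM hn
end

section
/- Let w̌ : I × S → ℝ be a second weight matrix with w̌_{is} ≥ 0 for all i ∈ I, s ∈ S, and suppose ň_s := ∑_{i∈I} w̌_{is} > 0 for every s ∈ S. Then ∑_{i∈I} ∑_{j∈I} ∑_{s∈S} ∑_{t∈S} w_{is} w_{jt} (w̌_{js}/ň_s) (w̌_{it}/ň_t) ≤ ∑_{s∈S} n_s. (Deterministic weight bound used in the proof of consistency of the leave-one-out IV estimator with estimated shifters, Proposition A.2.) -/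
/-!
With the column-normalised weights `q j s = w̌ j s / ň s`, the summand factors as
`P i j * P j i` for `P i j = ∑ s, w i s * q j s`. Every `P j i` lies in `[0, 1]`, because
`q ≤ 1` and the rows of `w` sum to at most one, so the sum is at most `∑ i j, P i j`; and since
each column of `q` sums to one, the row sums of `P` are those of `w`.
-/

open Finset

theorem sum_sum_mul_swap_le_sum_sum {ι K : Type*} [Fintype ι] [Semiring K] [PartialOrder K]
    [IsOrderedRing K] (P : ι → ι → K) (h0 : ∀ i j, 0 ≤ P i j)
    (h1 : ∀ i j, P i j ≤ 1) : ∑ i, ∑ j, P i j * P j i ≤ ∑ i, ∑ j, P i j :=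
  sum_le_sum fun i _ => sum_le_sum fun j _ => mul_le_of_le_one_right (h0 i j) (h1 j i)

theorem sum_div_sum_eq_one {ι K : Type*} [Fintype ι] [DivisionSemiring K] {f : ι → K}
    (hf : ∑ i, f i ≠ 0) : ∑ j, f j / ∑ i, f i = 1 := by
  rw [← sum_div, div_self hf]

theorem div_sum_le_one {ι K : Type*} [Fintype ι] [Semifield K] [LinearOrder K]
    [IsStrictOrderedRing K] {f : ι → K} (hf : ∀ i, 0 ≤ f i) (j : ι) : f j / ∑ i, f i ≤ 1 :=
  div_le_one_of_le₀ (single_le_sum (fun i _ => hf i) (mem_univ j)) (sum_nonneg fun i _ => hf i)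

theorem sum_sum_sum_sum_mul_eq {ι κ K : Type*} [Fintype ι] [Fintype κ] [CommSemiring K]
    (w q : ι → κ → K) :
    ∑ i, ∑ j, ∑ s, ∑ t, w i s * w j t * q j s * q i t =
      ∑ i, ∑ j, (∑ s, w i s * q j s) * ∑ t, w j t * q i t := by
  simp only [sum_mul_sum]
  exact sum_congr rfl fun i _ => sum_congr rfl fun j _ =>
    sum_congr rfl fun s _ => sum_congr rfl fun t _ => by ring

theorem sum_mul_le_one {ι κ K : Type*} [Fintype κ] [Semiring K] [PartialOrder K]
    [IsOrderedRing K] {w q : ι → κ → K} (hw : ∀ i s, 0 ≤ w i s) (hw1 : ∀ i, ∑ s, w i s ≤ 1)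
    (hq1 : ∀ j s, q j s ≤ 1) (i j : ι) : ∑ s, w i s * q j s ≤ 1 :=
  (sum_le_sum fun s _ => mul_le_of_le_one_right (hw i s) (hq1 j s)).trans (hw1 i)

theorem sum_sum_mul_of_sum_eq_one {ι κ K : Type*} [Fintype ι] [Fintype κ] [Semiring K]
    {w q : ι → κ → K} (hq : ∀ s, ∑ j, q j s = 1) (i : ι) :
    ∑ j, ∑ s, w i s * q j s = ∑ s, w i s := by
  rw [sum_comm]
  exact sum_congr rfl fun s _ => by rw [← mul_sum, hq s, mul_one]

theorem stmt_11_general {I S : Type*} [Fintype I] [Fintype S]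
    (w : I → S → ℝ) (hw : ∀ i s, 0 ≤ w i s) (hw1 : ∀ i, ∑ s, w i s ≤ 1)
    (wc : I → S → ℝ) (hwc : ∀ i s, 0 ≤ wc i s)
    (hnc : ∀ s, 0 < ∑ i, wc i s) :
    ∑ i, ∑ j, ∑ s, ∑ t,
        w i s * w j t * (wc j s / ∑ i', wc i' s) * (wc i t / ∑ i', wc i' t)
      ≤ ∑ s, ∑ i, w i s := by
  set q : I → S → ℝ := fun j s => wc j s / ∑ i', wc i' s
  have hq0 : ∀ j s, 0 ≤ q j s := fun j s => div_nonneg (hwc j s) (hnc s).le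
  have hq1 : ∀ j s, q j s ≤ 1 := fun j s => div_sum_le_one (fun i => hwc i s) j
  have hq : ∀ s, ∑ j, q j s = 1 := fun s => sum_div_sum_eq_one (hnc s).ne'
  calc ∑ i, ∑ j, ∑ s, ∑ t, w i s * w j t * q j s * q i t
      = ∑ i, ∑ j, (∑ s, w i s * q j s) * ∑ t, w j t * q i t := sum_sum_sum_sum_mul_eq w q
    _ ≤ ∑ i, ∑ j, ∑ s, w i s * q j s :=
        sum_sum_mul_swap_le_sum_sum (fun i j => ∑ s, w i s * q j s)
          (fun i j => sum_nonneg fun s _ => mul_nonneg (hw i s) (hq0 j s))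
          (sum_mul_le_one hw hw1 hq1)
    _ = ∑ i, ∑ s, w i s := sum_congr rfl fun i _ => sum_sum_mul_of_sum_eq_one hq i
    _ = ∑ s, ∑ i, w i s := sum_comm

/-- Deterministic weight bound used in the proof of consistency of the leave-one-out IV
estimator (Proposition A.2): for a second nonnegative weight matrix `w̌` with positive
column sums `ň s = ∑ i, w̌ i s`,
`∑ i j s t, w i s * w j t * (w̌ j s / ň s) * (w̌ i t / ň t) ≤ ∑ s, n s`. -/
theorem stmt_11 {I S : Type*} [Fintype I] [Fintype S] [Nonempty I] [Nonempty S]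
    (w : I → S → ℝ) (hw : ∀ i s, 0 ≤ w i s) (hw1 : ∀ i, ∑ s, w i s ≤ 1)
    (wc : I → S → ℝ) (hwc : ∀ i s, 0 ≤ wc i s)
    (hnc : ∀ s, 0 < ∑ i, wc i s) :
    ∑ i, ∑ j, ∑ s, ∑ t,
        w i s * w j t * (wc j s / ∑ i', wc i' s) * (wc i t / ∑ i', wc i' t)
      ≤ ∑ s, ∑ i, w i s :=
  stmt_11_general w hw hw1 wc hwc hnc
end

section
/- Let φ > 1 and let υ, ω, b be positive reals with ω·υ ≤ b. Then the function u ↦ max(ω·u, b) · φ · υ^φ · u^{−(φ+1)} is Lebesgue integrable on the interval [υ, ∞), and ∫_{[υ,∞)} max(ω·u, b) · φ · υ^φ · u^{−(φ+1)} du = b · (1 + (1/(φ−1)) · υ^φ · (ω/b)^φ). (Expected-utility computation under Pareto-distributed work-preference draws, proved in the migration extension of the stylized model, Online Appendix C.3: the expected utility of residing in a region with wage ω and benefit b equals (b/P)(1 + (1/(φ−1)) ν^φ (ω/b)^φ) up to the price normalization P.) -/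
open MeasureTheory

/-!
A worker with draw `u` works exactly when `u` exceeds the reservation draw `c = b / ω ≥ υ`.
Splitting `[υ, ∞)` at `c`, the integral is `b` times the Pareto mass `1 - (υ / c) ^ φ` of
`[υ, c]` plus `ω` times the partial mean `φ / (φ - 1) * c * (υ / c) ^ φ` of the tail beyond `c`;
since `ω * c = b` these add up to `b * (1 + (υ / c) ^ φ / (φ - 1))`.
-/

open Set Real

noncomputable def paretoPDF (υ φ u : ℝ) : ℝ := φ * υ ^ φ * u ^ (-(φ + 1))

section Pareto

variable {υ φ c : ℝ}

theorem intervalIntegrable_paretoPDF (hυ : 0 < υ) (hυc : υ ≤ c) :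
    IntervalIntegrable (paretoPDF υ φ) volume υ c :=
  (intervalIntegral.intervalIntegrable_rpow
    (Or.inr (notMem_uIcc_of_lt hυ (hυ.trans_le hυc)))).const_mul _

theorem integral_paretoPDF (hφ : φ ≠ 0) (hυ : 0 < υ) (hυc : υ ≤ c) :
    ∫ u in υ..c, paretoPDF υ φ u = 1 - (υ / c) ^ φ := by
  have hc : 0 < c := hυ.trans_le hυc
  have hφ' : -(φ + 1) ≠ -1 := by contrapose! hφ; linarith
  simp only [paretoPDF]
  rw [intervalIntegral.integral_const_mul,
    integral_rpow (Or.inr ⟨hφ', notMem_uIcc_of_lt hυ hc⟩), div_rpow hυ.le hc.le,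
    show -(φ + 1) + 1 = -φ by ring, rpow_neg hc.le, rpow_neg hυ.le]
  have := (rpow_pos_of_pos hυ φ).ne'
  have := (rpow_pos_of_pos hc φ).ne'
  field_simp
  ring

theorem mul_paretoPDF {u : ℝ} (hu : 0 < u) :
    u * paretoPDF υ φ u = φ * υ ^ φ * u ^ (-φ) := by
  rw [paretoPDF, show -(φ + 1) = -φ - 1 by ring, rpow_sub_one hu.ne']
  field_simp

theorem integrableOn_Ioi_mul_paretoPDF (hφ : 1 < φ) (hc : 0 < c) :
    IntegrableOn (fun u => u * paretoPDF υ φ u) (Ioi c) :=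
  IntegrableOn.congr_fun ((integrableOn_Ioi_rpow_of_lt (by linarith : -φ < -1) hc).const_mul _)
    (fun _ hu => (mul_paretoPDF (hc.trans hu)).symm) measurableSet_Ioi

theorem integral_Ioi_mul_paretoPDF (hφ : 1 < φ) (hυ : 0 ≤ υ) (hc : 0 < c) :
    ∫ u in Ioi c, u * paretoPDF υ φ u = φ / (φ - 1) * c * (υ / c) ^ φ := by
  rw [setIntegral_congr_fun measurableSet_Ioi (fun u hu => mul_paretoPDF (hc.trans hu)),
    integral_const_mul, integral_Ioi_rpow_of_lt (by linarith : -φ < -1) hc,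
    div_rpow hυ hc.le, rpow_add hc, rpow_neg hc.le, rpow_one]
  have : φ - 1 ≠ 0 := by linarith
  have : -φ + 1 ≠ 0 := by linarith
  have := (rpow_pos_of_pos hc φ).ne'
  field_simp
  ring

end Pareto

section RealizedUtility

variable {υ φ ω b : ℝ}

theorem max_mul_paretoPDF_eqOn_Ioc (hω : 0 < ω) :
    EqOn (fun u => max (ω * u) b * paretoPDF υ φ u) (fun u => b * paretoPDF υ φ u)
      (Ioc υ (b / ω)) := fun _ hu => by
  simp only [max_eq_right ((le_div_iff₀' hω).mp hu.2)]

theorem max_mul_paretoPDF_eqOn_Ioi (hω : 0 < ω) :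
    EqOn (fun u => max (ω * u) b * paretoPDF υ φ u) (fun u => ω * (u * paretoPDF υ φ u))
      (Ioi (b / ω)) := fun _ hu => by
  simp only [max_eq_left ((div_le_iff₀' hω).mp hu.le), mul_assoc]

end RealizedUtility

theorem stmt_15_general (φ υ ω b : ℝ) (hφ : 1 < φ) (hυ : 0 < υ) (hω : 0 < ω)
    (h : ω * υ ≤ b) :
    IntegrableOn (fun u : ℝ => max (ω * u) b * (φ * υ ^ φ * u ^ (-(φ + 1)))) (Set.Ici υ) ∧
      ∫ u in Set.Ici υ, max (ω * u) b * (φ * υ ^ φ * u ^ (-(φ + 1)))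
        = b * (1 + 1 / (φ - 1) * υ ^ φ * (ω / b) ^ φ) := by
  have hb : 0 < b := (mul_pos hω hυ).trans_le h
  have hc : 0 < b / ω := div_pos hb hω
  have hυc : υ ≤ b / ω := (le_div_iff₀' hω).mpr h
  have hlow := max_mul_paretoPDF_eqOn_Ioc (υ := υ) (φ := φ) (b := b) hω
  have hhigh := max_mul_paretoPDF_eqOn_Ioi (υ := υ) (φ := φ) (b := b) hω
  have hint_low := IntegrableOn.congr_fun
    ((intervalIntegrable_paretoPDF hυ hυc).1.const_mul b) hlow.symm measurableSet_Ioc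
  have hint_high := IntegrableOn.congr_fun
    ((integrableOn_Ioi_mul_paretoPDF hφ hc).const_mul ω) hhigh.symm measurableSet_Ioi
  rw [integrableOn_Ici_iff_integrableOn_Ioi, integral_Ici_eq_integral_Ioi,
    ← Ioc_union_Ioi_eq_Ioi hυc]
  refine ⟨hint_low.union hint_high, ?_⟩
  change ∫ u in Ioc υ (b / ω) ∪ Ioi (b / ω), max (ω * u) b * paretoPDF υ φ u = _
  rw [setIntegral_union Ioc_disjoint_Ioi_same measurableSet_Ioi hint_low hint_high,
    setIntegral_congr_fun measurableSet_Ioc hlow, setIntegral_congr_fun measurableSet_Ioi hhigh,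
    integral_const_mul, integral_const_mul, ← intervalIntegral.integral_of_le hυc,
    integral_paretoPDF (by linarith) hυ hυc, integral_Ioi_mul_paretoPDF hφ hυ.le hc,
    div_div_eq_mul_div, mul_div_assoc, mul_rpow hυ.le (div_pos hω hb).le]
  have : φ - 1 ≠ 0 := by linarith
  field_simp
  ring

/-- Expected-utility computation under Pareto-distributed work-preference draws (migration
extension, Online Appendix C.3): for `φ > 1` and `ω * υ ≤ b`, the function
`u ↦ max (ω * u) b * (φ * υ^φ * u^(-(φ+1)))` is integrable on `[υ, ∞)` with integral
`b * (1 + (1/(φ-1)) * υ^φ * (ω/b)^φ)`. -/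
theorem stmt_15 (φ υ ω b : ℝ) (hφ : 1 < φ) (hυ : 0 < υ) (hω : 0 < ω) (hb : 0 < b)
    (h : ω * υ ≤ b) :
    IntegrableOn (fun u : ℝ => max (ω * u) b * (φ * υ ^ φ * u ^ (-(φ + 1)))) (Set.Ici υ) ∧
      ∫ u in Set.Ici υ, max (ω * u) b * (φ * υ ^ φ * u ^ (-(φ + 1)))
        = b * (1 + 1 / (φ - 1) * υ ^ φ * (ω / b) ^ φ) :=
  stmt_15_general φ υ ω b hφ hυ hω h
end

section
/- Let φ > 0, let n ≥ 1, let a_1, …, a_n be strictly positive reals, and let U_1, …, U_n : Ω → ℝ be mutually independent random variables such that for every j and every real u > 0, μ{ω : U_j(ω) ≤ u} = exp(−u^{−φ}) (each U_j has the standard Fréchet distribution with shape φ). Then for every index i, μ{ω : a_j · U_j(ω) ≤ a_i · U_i(ω) for all j = 1, …, n} = a_i^φ / ∑_{j=1}^n a_j^φ. (Choice-probability formula underlying the regional population shares M_i = v_i ω_i^{φ_m}/∑_j v_j ω_j^{φ_m} in the migration extension of the stylized model, Online Appendix C.3.) -/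
/-!
Conditioning on `U i`, independence turns the probability into
`E[∏_{j ≠ i} exp (-((a i / a j) U i)^(-φ))] = E[exp (-r (U i)^(-φ))]`
with `r = ∑_{j ≠ i} (a i / a j)^(-φ)`.
Since `(U i)^(-φ)` is standard exponential, this expectation is `1 / (1 + r)`, which is
`(a i)^φ / ∑ j, (a j)^φ`.
-/

open MeasureTheory ProbabilityTheory Set Filter Topology Real

lemma setLIntegral_Ioi_exp_neg_mul {b : ℝ} (hb : 0 < b) (t : ℝ) :
    ∫⁻ x in Ioi t, ENNReal.ofReal (exp (-(b * x))) = ENNReal.ofReal (exp (-(b * t)) / b) := by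
  simp_rw [← neg_mul]
  rw [← ofReal_integral_eq_lintegral_ofReal (integrableOn_exp_mul_Ioi (neg_neg_of_pos hb) t)
      (ae_of_all _ fun x => (exp_pos _).le),
    integral_exp_mul_Ioi (neg_neg_of_pos hb), neg_div, div_neg, neg_neg]

noncomputable def frechetMeasure (φ : ℝ) : Measure ℝ :=
  ((volume.restrict (Ioi 0)).withDensity fun x => ENNReal.ofReal (exp (-x))).map
    (· ^ (-φ)⁻¹)

section Frechet

variable {φ : ℝ}

lemma frechetMeasure_apply {s : Set ℝ} (hs : MeasurableSet s) :
    frechetMeasure φ s = ∫⁻ x in (· ^ (-φ)⁻¹) ⁻¹' s ∩ Ioi 0, ENNReal.ofReal (exp (-x)) := by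
  have hpre : MeasurableSet ((· ^ (-φ)⁻¹) ⁻¹' s : Set ℝ) := (by fun_prop : Measurable _) hs
  rw [frechetMeasure, Measure.map_apply (by fun_prop) hs, withDensity_apply _ hpre,
    Measure.restrict_restrict hpre]

lemma frechetMeasure_Iic (hφ : 0 < φ) {u : ℝ} (hu : 0 < u) :
    frechetMeasure φ (Iic u) = ENNReal.ofReal (exp (-(u ^ (-φ)))) := by
  have hset : (· ^ (-φ)⁻¹) ⁻¹' Iic u ∩ Ioi 0 = Ici (u ^ (-φ)) := by
    ext x
    simp only [mem_inter_iff, mem_preimage, mem_Iic, mem_Ioi, mem_Ici]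
    constructor
    · rintro ⟨hxu, hx⟩
      exact (rpow_inv_le_iff_of_neg hx hu (neg_neg_of_pos hφ)).1 hxu
    · intro hux
      have hx := (rpow_pos_of_pos hu _).trans_le hux
      exact ⟨(rpow_inv_le_iff_of_neg hx hu (neg_neg_of_pos hφ)).2 hux, hx⟩
  rw [frechetMeasure_apply measurableSet_Iic, hset, ← restrict_Ioi_eq_restrict_Ici]
  simpa using setLIntegral_Ioi_exp_neg_mul one_pos (u ^ (-φ))

lemma frechetMeasure_Iic_zero : frechetMeasure φ (Iic 0) = 0 := by
  have hset : (· ^ (-φ)⁻¹) ⁻¹' Iic 0 ∩ Ioi 0 = (∅ : Set ℝ) := by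
    ext x
    simp only [mem_inter_iff, mem_preimage, mem_Iic, mem_Ioi, mem_empty_iff_false, iff_false,
      not_and]
    exact fun h hx => (rpow_pos_of_pos hx _).not_ge h
  rw [frechetMeasure_apply measurableSet_Iic, hset, Measure.restrict_empty, lintegral_zero_measure]

lemma lintegral_exp_neg_mul_rpow_neg_frechetMeasure (hφ : 0 < φ) {r : ℝ} (hr : 0 ≤ r) :
    ∫⁻ u, ENNReal.ofReal (exp (-(r * u ^ (-φ)))) ∂frechetMeasure φ
      = ENNReal.ofReal (1 + r)⁻¹ := by
  have hexp : Measurable fun x : ℝ => ENNReal.ofReal (exp (-x)) := by fun_prop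
  rw [frechetMeasure, lintegral_map (by fun_prop) (by fun_prop),
    lintegral_withDensity_eq_lintegral_mul _ hexp (by fun_prop)]
  calc
    ∫⁻ x in Ioi 0, ENNReal.ofReal (exp (-x)) * ENNReal.ofReal (exp (-(r * (x ^ (-φ)⁻¹) ^ (-φ))))
      = ∫⁻ x in Ioi 0, ENNReal.ofReal (exp (-((1 + r) * x))) := by
        refine setLIntegral_congr_fun measurableSet_Ioi fun x hx => ?_
        rw [rpow_inv_rpow (le_of_lt hx) (neg_ne_zero.2 hφ.ne'),
          ← ENNReal.ofReal_mul (exp_pos _).le, ← exp_add]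
        ring_nf
    _ = ENNReal.ofReal (1 + r)⁻¹ := by
        simpa using setLIntegral_Ioi_exp_neg_mul (by linarith : (0 : ℝ) < 1 + r) 0

lemma measure_le_zero_eq_zero_of_frechet_cdf {Ω : Type*} [MeasurableSpace Ω] {μ : Measure Ω}
    (hφ : 0 < φ) {V : Ω → ℝ}
    (hcdf : ∀ u : ℝ, 0 < u → μ {ω | V ω ≤ u} = ENNReal.ofReal (exp (-(u ^ (-φ))))) :
    μ {ω | V ω ≤ 0} = 0 := by
  have htend : Tendsto (fun u : ℝ => ENNReal.ofReal (exp (-(u ^ (-φ))))) (𝓝[>] 0) (𝓝 0) := by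
    simpa using ENNReal.tendsto_ofReal
      (tendsto_exp_atBot.comp (tendsto_neg_atTop_atBot.comp
        (tendsto_rpow_neg_nhdsGT_zero (neg_neg_of_pos hφ))))
  refine le_antisymm (ge_of_tendsto htend ?_) zero_le
  filter_upwards [self_mem_nhdsWithin] with u hu
  exact (hcdf u hu).symm ▸ measure_mono fun ω (hω : V ω ≤ 0) => hω.trans (le_of_lt hu)

lemma map_eq_frechetMeasure {Ω : Type*} [MeasurableSpace Ω] {μ : Measure Ω}
    [IsFiniteMeasure μ] (hφ : 0 < φ) {V : Ω → ℝ} (hV : Measurable V)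
    (hcdf : ∀ u : ℝ, 0 < u → μ {ω | V ω ≤ u} = ENNReal.ofReal (exp (-(u ^ (-φ))))) :
    μ.map V = frechetMeasure φ := by
  refine Measure.ext_of_Iic _ _ fun u => ?_
  rw [Measure.map_apply hV measurableSet_Iic]
  rcases lt_or_ge 0 u with hu | hu
  · exact (hcdf u hu).trans (frechetMeasure_Iic hφ hu).symm
  · have h0 := measure_le_zero_eq_zero_of_frechet_cdf hφ hcdf
    rw [measure_mono_null (preimage_mono (Iic_subset_Iic.2 hu)) h0,
      measure_mono_null (Iic_subset_Iic.2 hu) frechetMeasure_Iic_zero]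

end Frechet

lemma ProbabilityTheory.IndepFun.measure_preimage_prodMk {Ω α β : Type*} [MeasurableSpace Ω]
    [MeasurableSpace α] [MeasurableSpace β] {μ : Measure Ω} [IsFiniteMeasure μ]
    {X : Ω → α} {Y : Ω → β} (hXY : IndepFun X Y μ) (hX : Measurable X) (hY : Measurable Y)
    {B : Set (α × β)} (hB : MeasurableSet B) :
    μ ((fun ω => (X ω, Y ω)) ⁻¹' B) = ∫⁻ x, μ.map Y (Prod.mk x ⁻¹' B) ∂μ.map X := by
  rw [← Measure.map_apply (hX.prodMk hY) hB,
    (indepFun_iff_map_prod_eq_prod_map_map hX.aemeasurable hY.aemeasurable).1 hXY,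
    Measure.prod_apply hB]

lemma ProbabilityTheory.iIndepFun.measure_forall_le_comp {Ω ι : Type*} [MeasurableSpace Ω]
    {μ : Measure Ω} [Fintype ι] [DecidableEq ι] {U : ι → Ω → ℝ} (hU : ∀ j, Measurable (U j))
    (hind : iIndepFun U μ) (i : ι) {f : ι → ℝ → ℝ} (hf : ∀ j, Measurable (f j)) :
    μ {ω | ∀ j ≠ i, U j ω ≤ f j (U i ω)}
      = ∫⁻ x, ∏ j ∈ {i}ᶜ, μ {ω | U j ω ≤ f j x} ∂μ.map (U i) := by
  have hμ := hind.isProbabilityMeasure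
  set T : Finset ι := {i}ᶜ
  set Y : Ω → T → ℝ := fun ω j => U j ω
  have hY : Measurable Y := measurable_pi_lambda _ fun j => hU j
  have hXY : IndepFun (U i) Y μ := by
    exact (hind.indepFun_finset {i} T (Finset.disjoint_singleton_left.2 (by simp [T])) hU).comp
      (measurable_pi_apply ⟨i, Finset.mem_singleton_self i⟩) measurable_id
  set B : Set (ℝ × (T → ℝ)) := {p | ∀ j : T, p.2 j ≤ f j p.1}
  have hB : MeasurableSet B := by
    simp only [B, ofPred_forall]
    exact MeasurableSet.iInter fun j => measurableSet_le (by fun_prop) ((hf j).comp measurable_fst)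
  have hevent : {ω | ∀ j ≠ i, U j ω ≤ f j (U i ω)} = (fun ω => (U i ω, Y ω)) ⁻¹' B := by
    ext ω
    simp [B, Y, T]
  rw [hevent, hXY.measure_preimage_prodMk (hU i) hY hB]
  refine lintegral_congr fun x => ?_
  have hslice : Prod.mk x ⁻¹' B = univ.pi fun j : T => Iic (f j x) := by
    ext v
    simp [B, Pi.le_def]
  rw [hslice, Measure.map_apply hY (MeasurableSet.univ_pi fun _ => measurableSet_Iic)]
  have hpre : Y ⁻¹' univ.pi (fun j : T => Iic (f j x)) = ⋂ j ∈ T, U j ⁻¹' Iic (f j x) := by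
    ext ω
    simp [Y, Pi.le_def]
  rw [hpre, hind.meas_biInter fun j _ => ⟨Iic (f j x), measurableSet_Iic, rfl⟩]
  rfl

lemma inv_one_add_sum_compl_div_rpow_neg {ι : Type*} [Fintype ι] [DecidableEq ι] {a : ι → ℝ}
    (ha : ∀ j, 0 < a j) (φ : ℝ) (i : ι) :
    (1 + ∑ j ∈ {i}ᶜ, (a i / a j) ^ (-φ))⁻¹ = a i ^ φ / ∑ j, a j ^ φ := by
  have hi : a i ^ φ ≠ 0 := (rpow_pos_of_pos (ha i) φ).ne'
  have hterm : ∀ j, (a i / a j) ^ (-φ) = a j ^ φ / a i ^ φ := fun j => by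
    rw [rpow_neg (div_pos (ha i) (ha j)).le, div_rpow (ha i).le (ha j).le, inv_div]
  rw [Finset.sum_congr rfl fun j _ => hterm j, ← Finset.sum_div, Fintype.sum_eq_add_sum_compl i,
    one_add_div hi, inv_div]

theorem stmt_16_general {Ω : Type*} [MeasurableSpace Ω] (μ : Measure Ω) [IsProbabilityMeasure μ]
    (φ : ℝ) (hφ : 0 < φ) (n : ℕ)
    (a : Fin n → ℝ) (ha : ∀ j, 0 < a j)
    (U : Fin n → Ω → ℝ) (hUm : ∀ j, Measurable (U j))
    (hindep : iIndepFun U μ)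
    (hcdf : ∀ j, ∀ u : ℝ, 0 < u →
      μ {ω | U j ω ≤ u} = ENNReal.ofReal (Real.exp (-(u ^ (-φ))))) :
    ∀ i, μ {ω | ∀ j, a j * U j ω ≤ a i * U i ω}
      = ENNReal.ofReal (a i ^ φ / ∑ j, a j ^ φ) := by
  intro i
  set r := ∑ j ∈ {i}ᶜ, (a i / a j) ^ (-φ) with hr_def
  have hr : 0 ≤ r := Finset.sum_nonneg fun j _ => (rpow_pos_of_pos (div_pos (ha i) (ha j)) _).le
  have hevent : {ω | ∀ j, a j * U j ω ≤ a i * U i ω}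
      = {ω | ∀ j ≠ i, U j ω ≤ a i / a j * U i ω} := by
    ext ω
    refine forall_congr' fun j => ⟨fun h _ => ?_, fun h => ?_⟩
    · rwa [div_mul_eq_mul_div, le_div_iff₀' (ha j)]
    · rcases eq_or_ne j i with rfl | hj
      · exact le_rfl
      · rw [div_mul_eq_mul_div, le_div_iff₀' (ha j)] at h
        exact h hj
  have hslice : ∀ x, 0 < x →
      ∏ j ∈ {i}ᶜ, μ {ω | U j ω ≤ a i / a j * x} = ENNReal.ofReal (exp (-(r * x ^ (-φ)))) := by
    intro x hx
    rw [Finset.prod_congr rfl fun j _ => hcdf j _ (mul_pos (div_pos (ha i) (ha j)) hx),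
      ← ENNReal.ofReal_prod_of_nonneg fun j _ => (exp_pos _).le, ← exp_sum,
      Finset.sum_neg_distrib, hr_def, Finset.sum_mul]
    simp_rw [mul_rpow (div_pos (ha i) (ha _)).le hx.le]
  have hae : ∀ᵐ x ∂frechetMeasure φ, 0 < x :=
    ae_iff.2 <| by simp only [not_lt]; exact frechetMeasure_Iic_zero
  rw [hevent, hindep.measure_forall_le_comp hUm i fun j => measurable_const_mul _,
    map_eq_frechetMeasure hφ (hUm i) (hcdf i), lintegral_congr_ae (hae.mono hslice),
    lintegral_exp_neg_mul_rpow_neg_frechetMeasure hφ hr, inv_one_add_sum_compl_div_rpow_neg ha]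

/-- Fréchet choice-probability formula underlying the regional population shares in the
migration extension (Online Appendix C.3): if `U 1, …, U n` are independent standard
Fréchet random variables with shape `φ` and `a j > 0`, then for every `i`,
`μ {ω | ∀ j, a j * U j ω ≤ a i * U i ω} = (a i)^φ / ∑ j, (a j)^φ`. -/
theorem stmt_16 {Ω : Type*} [MeasurableSpace Ω] (μ : Measure Ω) [IsProbabilityMeasure μ]
    (φ : ℝ) (hφ : 0 < φ) (n : ℕ) (hn : 1 ≤ n)
    (a : Fin n → ℝ) (ha : ∀ j, 0 < a j)
    (U : Fin n → Ω → ℝ) (hUm : ∀ j, Measurable (U j))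
    (hindep : iIndepFun U μ)
    (hcdf : ∀ j, ∀ u : ℝ, 0 < u →
      μ {ω | U j ω ≤ u} = ENNReal.ofReal (Real.exp (-(u ^ (-φ))))) :
    ∀ i, μ {ω | ∀ j, a j * U j ω ≤ a i * U i ω}
      = ENNReal.ofReal (a i ^ φ / ∑ j, a j ^ φ) :=
  stmt_16_general μ φ hφ n a ha U hUm hindep hcdf
end
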